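/- Biased self-attention preserves a subgroup of permutations: with A(e) as above, define GA(e) = (w_v e) · (s((w_k e)ᵀ (w_q e)) + D) for a fixed matrix D ∈ M_{n×n}(ℝ). If σ is a permutation of Fin n whose permutation matrix P_σ satisfies P_σᵀ D P_σ = D (equivalently D P_σ = P_σ D), and s is conjugation-equivariant with respect to P_σ, then GA(e P_σ) = GA(e) P_σ. -/
import Mathlib


open Matrix

lemma perm_mat_eq {n : ℕ} (σ : Equiv.Perm (Fin n)) :
    (Matrix.of fun i j => if i = σ j then (1 : ℝ) else 0) =
      ((σ⁻¹ : Equiv.Perm (Fin n)).toPEquiv).toMatrix := by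
  ext i j
  simp [PEquiv.toMatrix, Equiv.toPEquiv]
  by_cases h : i = σ j
  · simp [h, Equiv.eq_symm_apply, eq_comm]
  · rw [if_neg h, if_neg]
    intro hj
    subst hj; exact h (by simp)

lemma perm_mat_mul_transpose {n : ℕ} (σ : Equiv.Perm (Fin n)) :
    (Matrix.of fun i j => if i = σ j then (1 : ℝ) else 0) *
      (Matrix.of fun i j => if i = σ j then (1 : ℝ) else 0)ᵀ = 1 := by
  rw [perm_mat_eq, ← PEquiv.toMatrix_symm, ← PEquiv.toMatrix_trans,
    ← Equiv.toPEquiv_symm, ← Equiv.toPEquiv_trans]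
  simp

theorem biased_self_attention_equivariant {d n : ℕ}
    (wv wk wq : Matrix (Fin d) (Fin d) ℝ)
    (D : Matrix (Fin n) (Fin n) ℝ)
    (s : Matrix (Fin n) (Fin n) ℝ → Matrix (Fin n) (Fin n) ℝ)
    (σ : Equiv.Perm (Fin n))
    (hs : ∀ M : Matrix (Fin n) (Fin n) ℝ,
      s ((Matrix.of fun i j => if i = σ j then (1 : ℝ) else 0)ᵀ * M *
          (Matrix.of fun i j => if i = σ j then (1 : ℝ) else 0)) =
        (Matrix.of fun i j => if i = σ j then (1 : ℝ) else 0)ᵀ * s M *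
          (Matrix.of fun i j => if i = σ j then (1 : ℝ) else 0))
    (hD : D * (Matrix.of fun i j => if i = σ j then (1 : ℝ) else 0) =
        (Matrix.of fun i j => if i = σ j then (1 : ℝ) else 0) * D)
    (e : Matrix (Fin d) (Fin n) ℝ) :
    (wv * (e * (Matrix.of fun i j => if i = σ j then (1 : ℝ) else 0))) *
        (s ((wk * (e * (Matrix.of fun i j => if i = σ j then (1 : ℝ) else 0)))ᵀ *
            (wq * (e * (Matrix.of fun i j => if i = σ j then (1 : ℝ) else 0)))) + D) =
      ((wv * e) * (s ((wk * e)ᵀ * (wq * e)) + D)) *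
        (Matrix.of fun i j => if i = σ j then (1 : ℝ) else 0) := by
  set P := (Matrix.of fun i j => if i = σ j then (1 : ℝ) else 0) with hP
  have hPP : P * Pᵀ = 1 := perm_mat_mul_transpose σ
  have harg : (wk * (e * P))ᵀ * (wq * (e * P)) = Pᵀ * ((wk * e)ᵀ * (wq * e)) * P := by
    simp only [Matrix.transpose_mul, Matrix.mul_assoc]
  rw [harg, hs]
  set M := s ((wk * e)ᵀ * (wq * e)) with hM
  have h1 : wv * (e * P) * (Pᵀ * M * P) = wv * e * M * P := by
    simp only [Matrix.mul_assoc]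
    rw [← Matrix.mul_assoc P Pᵀ (M * P), hPP, one_mul]
  have h2 : wv * (e * P) * D = wv * e * D * P := by
    simp only [Matrix.mul_assoc]
    rw [hD]
  simp only [Matrix.mul_add, Matrix.add_mul, h1, h2]
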